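/- For a smooth function of the form h(x) = (γ·x^{2s} + δ·x^{2s-1})·e^{tx} + (lower order terms in x times e^{tx}), with t ≠ 0 and s ≥ 1, the k-fold iterated integral I^k(h)(x) = ∫_0^x⋯∫ h has leading terms (γ/t^k)·x^{2s} + (δ/t^k - 2ks·γ/t^{k+1})·x^{2s-1} times e^{tx}, plus terms of lower degree in x times e^{tx} and polynomial terms. -/

import Mathlib

/-!
Since `(f e^{tx})' = (f' + t f) e^{tx}`, integration gives
`I(f e^{tx}) = t⁻¹ (f e^{tx} - f(0) - I(f' e^{tx}))`: each integration trades one degree of the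
polynomial factor for a factor `t⁻¹`. By induction on `d`, `I` therefore preserves the space
`S_d` of series `p e^{tx} + r` with polynomials `p`, `r` and `deg p < d`, and applying the
identity twice gives `I(x^n e^{tx}) ≡ (x^n / t - n x^{n-1} / t²) e^{tx}` modulo `S_{n-1}`.
Modulo `S_{m-1}`, the coefficients `a`, `b` of `x^m e^{tx}` and `x^{m-1} e^{tx}` in
`I^k(x^m e^{tx})` thus evolve by `a ↦ a / t`, `b ↦ b / t - m a / t²`, which is solved by
`a_k = t^{-k}`, `b_k = -k m t^{-k-1}`.
-/

/-- The integral operator on formal power series: `I(f)(x) = ∫_0^x f(t) dt`. -/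
noncomputable def intOp (f : PowerSeries ℚ) : PowerSeries ℚ :=
  PowerSeries.mk fun n => if n = 0 then 0 else PowerSeries.coeff (n - 1) f / (n : ℚ)

/-- The formal power series `e^{tx}`. -/
noncomputable def expSeries' (t : ℚ) : PowerSeries ℚ :=
  PowerSeries.mk fun n => t ^ n / (n.factorial : ℚ)

open PowerSeries

lemma Polynomial.derivative_mem_degreeLT {R : Type*} [Semiring R] {p : Polynomial R} {n : ℕ}
    (hp : p ∈ Polynomial.degreeLT R (n + 1)) :
    Polynomial.derivative p ∈ Polynomial.degreeLT R n := by
  rw [Polynomial.mem_degreeLT, Polynomial.degree_lt_iff_coeff_zero] at hp ⊢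
  intro j hj
  rw [Polynomial.coeff_derivative, hp (j + 1) (by omega), zero_mul]

noncomputable def intOpₗ : PowerSeries ℚ →ₗ[ℚ] PowerSeries ℚ where
  toFun := intOp
  map_add' f g := by
    ext n
    simp only [intOp, coeff_mk, map_add]
    split_ifs <;> ring
  map_smul' a f := by
    ext n
    simp only [intOp, coeff_mk, map_smul, smul_eq_mul, RingHom.id_apply]
    split_ifs <;> ring

lemma intOp_add (f g : PowerSeries ℚ) : intOp (f + g) = intOp f + intOp g := map_add intOpₗ f g

lemma intOp_sub (f g : PowerSeries ℚ) : intOp (f - g) = intOp f - intOp g := map_sub intOpₗ f g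

lemma intOp_smul (a : ℚ) (f : PowerSeries ℚ) : intOp (a • f) = a • intOp f :=
  map_smul intOpₗ a f

lemma intOp_derivative (f : PowerSeries ℚ) :
    intOp (d⁄dX ℚ f) = f - C (constantCoeff f) := by
  ext (_ | n)
  · simp [intOp]
  · simp only [intOp, coeff_mk, coeff_derivative, map_sub, coeff_C]
    push_cast
    field_simp
    simp

lemma derivative_expSeries' (t : ℚ) : d⁄dX ℚ (expSeries' t) = t • expSeries' t := by
  ext n
  simp only [expSeries', coeff_derivative, coeff_mk, coeff_smul, smul_eq_mul, Nat.factorial_succ]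
  push_cast
  field_simp
  ring

lemma intOp_mul_expSeries' {t : ℚ} (ht : t ≠ 0) (f : PowerSeries ℚ) :
    intOp (f * expSeries' t)
      = t⁻¹ • (f * expSeries' t - C (constantCoeff f)
        - intOp (d⁄dX ℚ f * expSeries' t)) := by
  have h := intOp_derivative (f * expSeries' t)
  rw [Derivation.leibniz, derivative_expSeries', smul_eq_mul, smul_eq_mul, intOp_add,
    mul_smul_comm, intOp_smul] at h
  have h0 : constantCoeff (expSeries' t) = 1 := by
    rw [← coeff_zero_eq_constantCoeff_apply]
    simp [expSeries']
  rw [map_mul, h0, mul_one, mul_comm (expSeries' t)] at h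
  rw [← h, add_sub_cancel_right, inv_smul_smul₀ ht]

def expPolyLT (t : ℚ) (d : ℕ) : Submodule ℚ (PowerSeries ℚ) where
  carrier :=
    {f | ∃ p ∈ Polynomial.degreeLT ℚ d, ∃ r : Polynomial ℚ, f = p * expSeries' t + r}
  zero_mem' := ⟨0, zero_mem _, 0, by simp⟩
  add_mem' := by
    rintro _ _ ⟨p, hp, r, rfl⟩ ⟨p', hp', r', rfl⟩
    exact ⟨p + p', add_mem hp hp', r + r', by push_cast; ring⟩
  smul_mem' := by
    rintro a _ ⟨p, hp, r, rfl⟩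
    refine ⟨a • p, Submodule.smul_mem _ a hp, a • r, ?_⟩
    simp only [Polynomial.coe_smul, smul_add, smul_mul_assoc]

variable {t : ℚ} {d : ℕ}

lemma coe_mem_expPolyLT (r : Polynomial ℚ) : (r : PowerSeries ℚ) ∈ expPolyLT t d :=
  ⟨0, zero_mem _, r, by simp⟩

lemma coe_mul_expSeries'_mem_expPolyLT {p : Polynomial ℚ} (hp : p ∈ Polynomial.degreeLT ℚ d) :
    (p : PowerSeries ℚ) * expSeries' t ∈ expPolyLT t d :=
  ⟨p, hp, 0, by simp⟩

lemma expPolyLT_mono {d' : ℕ} (h : d ≤ d') : expPolyLT t d ≤ expPolyLT t d' := by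
  rintro _ ⟨p, hp, r, rfl⟩
  exact ⟨p, Polynomial.degreeLT_mono h hp, r, rfl⟩

lemma exists_intOp_coe_eq_coe (r : Polynomial ℚ) : ∃ R : Polynomial ℚ, intOp r = R := by
  induction r using Polynomial.induction_on' with
  | add p q hp hq =>
    obtain ⟨P, hP⟩ := hp
    obtain ⟨Q, hQ⟩ := hq
    exact ⟨P + Q, by rw [Polynomial.coe_add, intOp_add, hP, hQ, Polynomial.coe_add]⟩
  | monomial n a =>
    refine ⟨Polynomial.monomial (n + 1) (a / (n + 1)), ?_⟩
    ext (_ | j) <;> simp only [intOp, coeff_mk, Polynomial.coeff_coe, Polynomial.coeff_monomial]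
    · simp
    · by_cases h : n = j <;> simp [h]

lemma intOp_mem_expPolyLT (ht : t ≠ 0) {f : PowerSeries ℚ} (hf : f ∈ expPolyLT t d) :
    intOp f ∈ expPolyLT t d := by
  induction d generalizing f with
  | zero =>
    obtain ⟨p, hp, r, rfl⟩ := hf
    obtain ⟨R, hR⟩ := exists_intOp_coe_eq_coe r
    rw [Polynomial.mem_degreeLT, Nat.cast_zero, Nat.WithBot.lt_zero_iff,
      Polynomial.degree_eq_bot] at hp
    simp [hp, hR, coe_mem_expPolyLT]
  | succ d ih =>
    obtain ⟨p, hp, r, rfl⟩ := hf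
    obtain ⟨R, hR⟩ := exists_intOp_coe_eq_coe r
    have hp' := ih
      (coe_mul_expSeries'_mem_expPolyLT (t := t) (Polynomial.derivative_mem_degreeLT hp))
    rw [intOp_add, hR, intOp_mul_expSeries' ht, derivative_coe, ← Polynomial.coe_C]
    exact add_mem (Submodule.smul_mem _ _ (sub_mem (sub_mem (coe_mul_expSeries'_mem_expPolyLT hp)
      (coe_mem_expPolyLT _)) (expPolyLT_mono d.le_succ hp'))) (coe_mem_expPolyLT R)

lemma intOp_coe_mul_expSeries'_sub_mem (ht : t ≠ 0) {p : Polynomial ℚ}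
    (hp : p ∈ Polynomial.degreeLT ℚ (d + 1)) :
    intOp (p * expSeries' t) - t⁻¹ • ((p : PowerSeries ℚ) * expSeries' t)
      ∈ expPolyLT t d := by
  have hp' := intOp_mem_expPolyLT ht
    (coe_mul_expSeries'_mem_expPolyLT (t := t) (Polynomial.derivative_mem_degreeLT hp))
  set e := expSeries' t
  have key : intOp (p * e) - t⁻¹ • ((p : PowerSeries ℚ) * e)
      = -t⁻¹ • (C (constantCoeff (p : PowerSeries ℚ)) + intOp (d⁄dX ℚ p * e)) := by
    rw [intOp_mul_expSeries' ht]
    module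
  rw [key, derivative_coe, ← Polynomial.coe_C]
  exact Submodule.smul_mem _ _ (add_mem (coe_mem_expPolyLT _) hp')

lemma intOp_X_pow_mul_expSeries'_sub_mem (ht : t ≠ 0) (n : ℕ) :
    intOp (X ^ n * expSeries' t) - t⁻¹ • (X ^ n * expSeries' t) ∈ expPolyLT t n := by
  have hX : (Polynomial.X ^ n : Polynomial ℚ) ∈ Polynomial.degreeLT ℚ (n + 1) := by
    rw [Polynomial.mem_degreeLT, Polynomial.degree_X_pow]
    exact_mod_cast n.lt_succ_self
  simpa using intOp_coe_mul_expSeries'_sub_mem ht hX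

lemma intOp_X_pow_mul_expSeries'_sub_mem_pred (ht : t ≠ 0) (n : ℕ) :
    intOp (X ^ n * expSeries' t)
      - (t⁻¹ • (X ^ n * expSeries' t) - (n * t⁻¹ ^ 2) • (X ^ (n - 1) * expSeries' t))
      ∈ expPolyLT t (n - 1) := by
  set e := expSeries' t
  have key : intOp (X ^ n * e) - (t⁻¹ • (X ^ n * e) - (n * t⁻¹ ^ 2) • (X ^ (n - 1) * e))
      = -t⁻¹ • C (constantCoeff (X ^ n : PowerSeries ℚ))
        - (t⁻¹ * n) • (intOp (X ^ (n - 1) * e) - t⁻¹ • (X ^ (n - 1) * e)) := by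
    rw [intOp_mul_expSeries' ht, derivative_pow, derivative_X, mul_one, mul_assoc,
      ← map_natCast (C (R := ℚ)), ← smul_eq_C_mul, intOp_smul]
    module
  rw [key, ← Polynomial.coe_C]
  exact sub_mem (Submodule.smul_mem _ _ (coe_mem_expPolyLT _))
    (Submodule.smul_mem _ _ (intOp_X_pow_mul_expSeries'_sub_mem ht _))

lemma iterate_intOp_X_pow_mul_expSeries'_sub_mem (ht : t ≠ 0) (m k : ℕ) :
    intOp^[k] (X ^ m * expSeries' t)
      - ((t ^ k)⁻¹ • (X ^ m * expSeries' t)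
        - ((k * m : ℕ) / t ^ (k + 1) : ℚ) • (X ^ (m - 1) * expSeries' t))
      ∈ expPolyLT t (m - 1) := by
  induction k with
  | zero => simp
  | succ k ih =>
    set e := expSeries' t
    have key : intOp^[k + 1] (X ^ m * e)
        - ((t ^ (k + 1))⁻¹ • (X ^ m * e)
          - (((k + 1) * m : ℕ) / t ^ (k + 1 + 1) : ℚ) • (X ^ (m - 1) * e))
        = intOp (intOp^[k] (X ^ m * e)
            - ((t ^ k)⁻¹ • (X ^ m * e)
              - ((k * m : ℕ) / t ^ (k + 1) : ℚ) • (X ^ (m - 1) * e)))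
          + (t ^ k)⁻¹ • (intOp (X ^ m * e)
            - (t⁻¹ • (X ^ m * e) - (m * t⁻¹ ^ 2) • (X ^ (m - 1) * e)))
          - ((k * m : ℕ) / t ^ (k + 1) : ℚ)
            • (intOp (X ^ (m - 1) * e) - t⁻¹ • (X ^ (m - 1) * e)) := by
      rw [Function.iterate_succ_apply']
      simp only [intOp_sub, intOp_smul]
      push_cast
      module
    rw [key]
    exact sub_mem (add_mem (intOp_mem_expPolyLT ht ih) (Submodule.smul_mem _ _
      (intOp_X_pow_mul_expSeries'_sub_mem_pred ht m)))
      (Submodule.smul_mem _ _ (intOp_X_pow_mul_expSeries'_sub_mem ht _))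

theorem iterated_integral_leading_terms_general (t : ℚ) (ht : t ≠ 0) (m k : ℕ) :
    ∃ q r : Polynomial ℚ, q.degree < ((m - 1 : ℕ) : WithBot ℕ) ∧
      intOp^[k] (((Polynomial.X ^ m : Polynomial ℚ) : PowerSeries ℚ) * expSeries' t)
        = ((Polynomial.monomial m (1 / t ^ k)
            + Polynomial.monomial (m - 1) (-((k * m : ℕ) : ℚ) / t ^ (k + 1))
            + q : Polynomial ℚ) : PowerSeries ℚ) * expSeries' t
          + (r : PowerSeries ℚ) := by
  obtain ⟨q, hq, r, hqr⟩ := iterate_intOp_X_pow_mul_expSeries'_sub_mem ht m k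
  refine ⟨q, r, Polynomial.mem_degreeLT.mp hq, ?_⟩
  rw [sub_eq_iff_eq_add] at hqr
  simp only [Polynomial.coe_pow, Polynomial.coe_X, hqr, Polynomial.coe_add,
    Polynomial.coe_monomial, monomial_eq_C_mul_X_pow, ← smul_eq_C_mul, add_mul, smul_mul_assoc]
  module

theorem iterated_integral_leading_terms (t : ℚ) (ht : t ≠ 0) (m k : ℕ) (hm : 1 ≤ m) :
    ∃ q r : Polynomial ℚ, q.degree < ((m - 1 : ℕ) : WithBot ℕ) ∧
      intOp^[k] (((Polynomial.X ^ m : Polynomial ℚ) : PowerSeries ℚ) * expSeries' t)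
        = ((Polynomial.monomial m (1 / t ^ k)
            + Polynomial.monomial (m - 1) (-((k * m : ℕ) : ℚ) / t ^ (k + 1))
            + q : Polynomial ℚ) : PowerSeries ℚ) * expSeries' t
          + (r : PowerSeries ℚ) :=
  iterated_integral_leading_terms_general t ht m k
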